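/- arXiv:1505.07209 — 5 statements merged into one kernel-verified Lean document; each statement's English description precedes it below -/
import Mathlib

section
/- Let M be a pointed metric space. On the span of {δ_x : x ∈ M} in F(M), define ‖a‖_KR = inf { Σ |α_i| d(y_i, z_i) : a = Σ α_i (δ_{y_i} − δ_{z_i}) }. Then ‖·‖_KR coincides with the norm of F(M) (the dual norm inherited from Lip_0(M)*). -/
open Metric Set
open scoped NNReal ENNReal

/-- The space of real-valued Lipschitz functions on `M` vanishing at the base point `z`. -/
structure Lip0 {M : Type*} [MetricSpace M] (z : M) where
  toFun : M → ℝ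
  lipschitz' : ∃ K : ℝ≥0, LipschitzWith K toFun
  map_base' : toFun z = 0

namespace Lip0

variable {M : Type*} [MetricSpace M] {z : M}

instance : FunLike (Lip0 z) M ℝ where
  coe := Lip0.toFun
  coe_injective := by rintro ⟨f, _, _⟩ ⟨g, _, _⟩ h; simpa using h

@[simp] lemma coe_mk (f : M → ℝ) (h1 h2) : ⇑(⟨f, h1, h2⟩ : Lip0 z) = f := rfl

lemma map_base (f : Lip0 z) : f z = 0 := f.map_base'

instance : Zero (Lip0 z) := ⟨⟨0, ⟨0, LipschitzWith.const (0 : ℝ)⟩, rfl⟩⟩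

instance : Add (Lip0 z) :=
  ⟨fun f g => ⟨⇑f + ⇑g,
    ⟨f.lipschitz'.choose + g.lipschitz'.choose,
      f.lipschitz'.choose_spec.add g.lipschitz'.choose_spec⟩,
    by simp [map_base f, map_base g]⟩⟩

instance : Neg (Lip0 z) :=
  ⟨fun f => ⟨-⇑f, ⟨f.lipschitz'.choose, f.lipschitz'.choose_spec.neg⟩,
    by simp [map_base f]⟩⟩

lemma lip_const_smul {f : M → ℝ} {K : ℝ≥0} (h : LipschitzWith K f) (c : ℝ) :
    LipschitzWith (‖c‖₊ * K) (c • f) := by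
  rw [lipschitzWith_iff_dist_le_mul] at h ⊢
  intro x y
  calc dist ((c • f) x) ((c • f) y) = ‖c‖ * dist (f x) (f y) := by
        rw [Pi.smul_apply, Pi.smul_apply, dist_smul₀]
    _ ≤ ‖c‖ * (K * dist x y) := by
        apply mul_le_mul_of_nonneg_left (h x y) (norm_nonneg c)
    _ = (‖c‖₊ * K : ℝ≥0) * dist x y := by push_cast; ring

instance : SMul ℝ (Lip0 z) :=
  ⟨fun c f => ⟨c • ⇑f,
    ⟨‖c‖₊ * f.lipschitz'.choose, lip_const_smul f.lipschitz'.choose_spec c⟩,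
    by simp [map_base f]⟩⟩

instance : Sub (Lip0 z) := ⟨fun f g => f + -g⟩
instance : SMul ℕ (Lip0 z) := ⟨fun n f => (n : ℝ) • f⟩
instance : SMul ℤ (Lip0 z) := ⟨fun n f => (n : ℝ) • f⟩

@[simp] lemma coe_zero : ⇑(0 : Lip0 z) = 0 := rfl
@[simp] lemma coe_add (f g : Lip0 z) : ⇑(f + g) = ⇑f + ⇑g := rfl
@[simp] lemma coe_neg (f : Lip0 z) : ⇑(-f) = -⇑f := rfl
@[simp] lemma coe_smul (c : ℝ) (f : Lip0 z) : ⇑(c • f) = c • ⇑f := rfl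
@[simp] lemma coe_sub (f g : Lip0 z) : ⇑(f - g) = ⇑f - ⇑g := by
  show ⇑(f + -g) = _; ext x; simp [sub_eq_add_neg]

instance : AddCommGroup (Lip0 z) :=
  DFunLike.coe_injective.addCommGroup _ coe_zero coe_add coe_neg coe_sub
    (fun f n => by show ⇑((n : ℝ) • f) = _; ext x; simp)
    (fun f n => by show ⇑((n : ℝ) • f) = _; ext x; simp)

instance : Module ℝ (Lip0 z) := by
  refine Function.Injective.module ℝ (AddMonoidHom.mk' (fun (f : Lip0 z) => ⇑f) coe_add) ?_ ?_
  · exact DFunLike.coe_injective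
  · exact coe_smul

/-- The least Lipschitz constant. -/
noncomputable def lipConst (f : M → ℝ) : ℝ≥0 := sInf {K : ℝ≥0 | LipschitzWith K f}

lemma lipschitzWith_lipConst {f : M → ℝ} (h : ∃ K : ℝ≥0, LipschitzWith K f) :
    LipschitzWith (lipConst f) f := by
  rw [lipschitzWith_iff_dist_le_mul]
  intro x y
  rcases eq_or_ne x y with rfl | hxy
  · simp
  have hd : 0 < dist x y := dist_pos.2 hxy
  have h1 : (show ℝ≥0 from ⟨dist (f x) (f y) / dist x y, by positivity⟩) ≤ lipConst f := by
    apply le_csInf h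
    intro K hK
    rw [← NNReal.coe_le_coe]
    have hK' := lipschitzWith_iff_dist_le_mul.1 hK
    exact (div_le_iff₀ hd).2 (by simpa [mul_comm] using hK' x y)
  rw [← NNReal.coe_le_coe] at h1
  calc dist (f x) (f y) = dist (f x) (f y) / dist x y * dist x y := by field_simp
    _ ≤ (lipConst f : ℝ) * dist x y := by
        apply mul_le_mul_of_nonneg_right _ hd.le
        exact h1



lemma lipConst_le {f : M → ℝ} {K : ℝ≥0} (h : LipschitzWith K f) : lipConst f ≤ K :=
  csInf_le (OrderBot.bddBelow _) h

lemma dist_le_lipConst (f : Lip0 z) (x y : M) :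
    dist (f x) (f y) ≤ (lipConst ⇑f : ℝ) * dist x y :=
  lipschitzWith_iff_dist_le_mul.1 (lipschitzWith_lipConst f.lipschitz') x y

noncomputable instance : Norm (Lip0 z) := ⟨fun f => (lipConst ⇑f : ℝ)⟩

lemma norm_def (f : Lip0 z) : ‖f‖ = (lipConst ⇑f : ℝ) := rfl

lemma eq_zero_of_lipConst_eq_zero (f : Lip0 z) (h : lipConst ⇑f = 0) : f = 0 := by
  apply DFunLike.coe_injective
  ext x
  have h2 := dist_le_lipConst f x z
  rw [h, map_base f] at h2
  simp only [NNReal.coe_zero, zero_mul] at h2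
  have := dist_nonneg (x := f x) (y := (0:ℝ))
  simp only [coe_zero, Pi.zero_apply]
  have : dist (f x) (0:ℝ) = 0 := le_antisymm h2 dist_nonneg
  simpa [dist_eq_norm] using this

lemma lipConst_smul (c : ℝ) (f : Lip0 z) : lipConst ⇑(c • f) = ‖c‖₊ * lipConst ⇑f := by
  have le1 : ∀ (c : ℝ) (f : Lip0 z), lipConst ⇑(c • f) ≤ ‖c‖₊ * lipConst ⇑f := by
    intro c f
    exact lipConst_le (lip_const_smul (lipschitzWith_lipConst f.lipschitz') c)
  rcases eq_or_ne c 0 with rfl | hc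
  · simp only [nnnorm_zero, zero_mul]
    refine le_antisymm ?_ zero_le
    have : (0:ℝ) • f = (0 : Lip0 z) := zero_smul ℝ f
    calc lipConst ⇑((0:ℝ) • f) ≤ ‖(0:ℝ)‖₊ * lipConst ⇑f := le1 0 f
      _ = 0 := by simp
  · refine le_antisymm (le1 c f) ?_
    have h2 := le1 c⁻¹ (c • f)
    rw [inv_smul_smul₀ hc] at h2
    have hcpos : (0:ℝ≥0) < ‖c‖₊ := by simpa using hc
    calc ‖c‖₊ * lipConst ⇑f ≤ ‖c‖₊ * (‖c⁻¹‖₊ * lipConst ⇑(c • f)) := by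
          exact mul_le_mul_of_nonneg_left h2 zero_le
      _ = lipConst ⇑(c • f) := by
          rw [← mul_assoc]
          have : ‖c‖₊ * ‖c⁻¹‖₊ = 1 := by
            rw [← nnnorm_mul, mul_inv_cancel₀ hc, nnnorm_one]
          rw [this, one_mul]

noncomputable def addGroupNorm (z : M) : AddGroupNorm (Lip0 z) where
  toFun f := (lipConst ⇑f : ℝ)
  map_zero' := by
    simp only [coe_zero]
    norm_cast
    exact le_antisymm (lipConst_le (LipschitzWith.const' (0:ℝ))) zero_le
  add_le' f g := by
    push_cast
    have : lipConst ⇑(f + g) ≤ lipConst ⇑f + lipConst ⇑g := by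
      refine lipConst_le ?_
      exact (lipschitzWith_lipConst f.lipschitz').add (lipschitzWith_lipConst g.lipschitz')
    exact_mod_cast this
  neg' f := by
    have h : (-⇑f : M → ℝ) = ⇑((-1 : ℝ) • f) := by ext x; simp
    show (lipConst ⇑(-f) : ℝ) = (lipConst ⇑f : ℝ)
    rw [coe_neg, h, lipConst_smul]
    simp
  eq_zero_of_map_eq_zero' f h := by
    apply eq_zero_of_lipConst_eq_zero
    have h' : (lipConst ⇑f : ℝ) = 0 := h
    exact_mod_cast h'

noncomputable instance : NormedAddCommGroup (Lip0 z) :=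
  (addGroupNorm z).toNormedAddCommGroup

noncomputable instance : NormedSpace ℝ (Lip0 z) where
  norm_smul_le c f := by
    show (lipConst ⇑(c • f) : ℝ) ≤ ‖c‖ * (lipConst ⇑f : ℝ)
    rw [lipConst_smul]
    push_cast
    simp [Real.norm_eq_abs]

end Lip0

section FreeSpace

variable {M : Type*} [MetricSpace M]

/-- The evaluation functional `δ_x ∈ Lip_0(M)^*`. -/
noncomputable def dirac (z x : M) : StrongDual ℝ (Lip0 z) :=
  LinearMap.mkContinuous
    { toFun := fun f => f x
      map_add' := by intro f g; simp
      map_smul' := by intro c f; simp }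
    (dist x z)
    (by
      intro f
      have := Lip0.dist_le_lipConst f x z
      rw [Lip0.map_base f, dist_zero_right] at this
      show ‖f x‖ ≤ dist x z * (Lip0.lipConst ⇑f : ℝ)
      simpa [Lip0.norm_def, mul_comm] using this)

@[simp] lemma dirac_apply (z x : M) (f : Lip0 z) : dirac z x f = f x := rfl

/-- The Lipschitz-free space over `M` with base point `z`: the closed linear span of
the evaluation functionals inside `Lip_0(M)^*`. -/
noncomputable def FreeSpace (z : M) : Submodule ℝ (StrongDual ℝ (Lip0 z)) :=
  (Submodule.span ℝ (Set.range (dirac z))).topologicalClosure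

/-- The canonical embedding `δ : M → F(M)`. -/
noncomputable def diracF (z x : M) : FreeSpace z :=
  ⟨dirac z x, Submodule.le_topologicalClosure _ (Submodule.subset_span ⟨x, rfl⟩)⟩

end FreeSpace

/-!
The bound `‖a‖ ≤ ∑ |αᵢ| d(yᵢ, wᵢ)` is the triangle inequality, as `‖δ_y - δ_w‖ ≤ d(y, w)`.
Conversely, the infimum is a seminorm `p` on the span of the Dirac functionals, so Hahn–Banach
gives a linear functional `g` with `|g| ≤ p` and `g a = p a`. Since `p (δ_x - δ_y) ≤ d(x, y)`,
`f x := g δ_x` is a 1-Lipschitz function vanishing at the base point, and `a f = g a = p a`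
(both sides are linear in `a` and agree on Dirac functionals), whence `p a ≤ ‖a‖`.
-/

theorem Seminorm.exists_dual_abs_le_and_eq {E : Type*} [AddCommGroup E] [Module ℝ E]
    (p : Seminorm ℝ E) (x : E) : ∃ g : Module.Dual ℝ E, (∀ y, |g y| ≤ p y) ∧ g x = p x := by
  rcases eq_or_ne x (0 : E) with rfl | hx
  · exact ⟨0, fun y => by simp, by simp⟩
  let f : E →ₗ.[ℝ] ℝ := LinearPMap.mkSpanSingleton x (p x) hx
  have hf : ∀ y : f.domain, f y ≤ p y := by
    rintro ⟨y, hy⟩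
    obtain ⟨t, rfl⟩ := Submodule.mem_span_singleton.mp hy
    calc f ⟨t • x, hy⟩ = t * p x := LinearPMap.mkSpanSingleton'_apply _ _ _ t _
      _ ≤ |t| * p x := mul_le_mul_of_nonneg_right (le_abs_self t) (apply_nonneg p x)
      _ = p (t • x) := by rw [map_smul_eq_mul, Real.norm_eq_abs]
  obtain ⟨g, hgf, hgp⟩ := exists_extension_of_le_sublinear f p
    (fun c hc y => by rw [map_smul_eq_mul, Real.norm_of_nonneg hc.le]) (map_add_le_add p) hf
  refine ⟨g, p.abs_le_of_le hgp, ?_⟩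
  rw [hgf ⟨x, Submodule.mem_span_singleton_self x⟩, LinearPMap.mkSpanSingleton_apply]

section KantorovichRubinstein

variable {M : Type*} [MetricSpace M] {z : M}

open scoped Pointwise

def krCosts (z : M) (a : StrongDual ℝ (Lip0 z)) : Set ℝ :=
  {r : ℝ | ∃ (k : ℕ) (α : Fin k → ℝ) (y w : Fin k → M),
      a = ∑ i, α i • (dirac z (y i) - dirac z (w i)) ∧
      r = ∑ i, |α i| * dist (y i) (w i)}

lemma dirac_self (z : M) : dirac z z = 0 := by
  ext f
  simp [Lip0.map_base]

lemma norm_dirac_sub_dirac_le (x y : M) : ‖dirac z x - dirac z y‖ ≤ dist x y := by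
  refine ContinuousLinearMap.opNorm_le_bound _ dist_nonneg fun f => ?_
  calc ‖(dirac z x - dirac z y) f‖ = dist (f x) (f y) := by simp [Real.dist_eq]
    _ ≤ Lip0.lipConst ⇑f * dist x y := Lip0.dist_le_lipConst f x y
    _ = dist x y * ‖f‖ := by rw [Lip0.norm_def, mul_comm]

lemma norm_le_of_mem_krCosts {a : StrongDual ℝ (Lip0 z)} {r : ℝ} (h : r ∈ krCosts z a) :
    ‖a‖ ≤ r := by
  obtain ⟨k, α, y, w, rfl, rfl⟩ := h
  refine (norm_sum_le _ _).trans (Finset.sum_le_sum fun i _ => ?_)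
  rw [norm_smul, Real.norm_eq_abs]
  exact mul_le_mul_of_nonneg_left (norm_dirac_sub_dirac_le _ _) (abs_nonneg _)

lemma nonneg_of_mem_krCosts {a : StrongDual ℝ (Lip0 z)} {r : ℝ} (h : r ∈ krCosts z a) :
    0 ≤ r := by
  obtain ⟨k, α, y, w, -, rfl⟩ := h
  exact Finset.sum_nonneg fun i _ => mul_nonneg (abs_nonneg _) dist_nonneg

lemma bddBelow_krCosts (a : StrongDual ℝ (Lip0 z)) : BddBelow (krCosts z a) :=
  ⟨0, fun _ => nonneg_of_mem_krCosts⟩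

lemma zero_mem_krCosts : (0 : ℝ) ∈ krCosts z 0 :=
  ⟨0, ![], ![], ![], by simp, by simp⟩

lemma dist_mem_krCosts (x y : M) : dist x y ∈ krCosts z (dirac z x - dirac z y) :=
  ⟨1, ![1], ![x], ![y], by simp, by simp⟩

lemma krCosts_add_subset (a b : StrongDual ℝ (Lip0 z)) :
    krCosts z a + krCosts z b ⊆ krCosts z (a + b) := by
  rintro _ ⟨_, ⟨k, α, y, w, rfl, rfl⟩, _, ⟨l, β, u, v, rfl, rfl⟩, rfl⟩
  refine ⟨k + l, Fin.append α β, Fin.append y u, Fin.append w v, ?_, ?_⟩ <;>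
    simp [Fin.sum_univ_add]

lemma krCosts_smul_subset (c : ℝ) (a : StrongDual ℝ (Lip0 z)) :
    |c| • krCosts z a ⊆ krCosts z (c • a) := by
  rintro _ ⟨_, ⟨k, α, y, w, rfl, rfl⟩, rfl⟩
  refine ⟨k, c • α, y, w, ?_, ?_⟩
  · simp [Finset.smul_sum, smul_smul]
  · simp [Finset.mul_sum, abs_mul, mul_assoc]

noncomputable abbrev diracSpan (z : M) : Submodule ℝ (StrongDual ℝ (Lip0 z)) :=
  Submodule.span ℝ (Set.range (dirac z))

noncomputable def toDiracSpan (z x : M) : diracSpan z :=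
  ⟨dirac z x, Submodule.subset_span ⟨x, rfl⟩⟩

lemma krCosts_nonempty {a : StrongDual ℝ (Lip0 z)} (ha : a ∈ diracSpan z) :
    (krCosts z a).Nonempty := by
  induction ha using Submodule.span_induction with
  | mem _ hx =>
    obtain ⟨x, rfl⟩ := hx
    exact ⟨_, by simpa [dirac_self] using dist_mem_krCosts (z := z) x z⟩
  | zero => exact ⟨0, zero_mem_krCosts⟩
  | add a b _ _ ha hb => exact (ha.add hb).mono (krCosts_add_subset a b)
  | smul c a _ ha => exact (ha.smul_set (a := |c|)).mono (krCosts_smul_subset c a)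

lemma sInf_krCosts_add_le {a b : StrongDual ℝ (Lip0 z)} (ha : a ∈ diracSpan z)
    (hb : b ∈ diracSpan z) :
    sInf (krCosts z (a + b)) ≤ sInf (krCosts z a) + sInf (krCosts z b) := by
  have hab := (krCosts_nonempty ha).add (krCosts_nonempty hb)
  rw [← csInf_add (krCosts_nonempty ha) (bddBelow_krCosts a) (krCosts_nonempty hb)
    (bddBelow_krCosts b)]
  exact csInf_le_csInf (bddBelow_krCosts _) hab (krCosts_add_subset a b)

lemma sInf_krCosts_smul_le (c : ℝ) {a : StrongDual ℝ (Lip0 z)} (ha : a ∈ diracSpan z) :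
    sInf (krCosts z (c • a)) ≤ |c| * sInf (krCosts z a) := by
  rw [← smul_eq_mul, ← Real.sInf_smul_of_nonneg (abs_nonneg c)]
  exact csInf_le_csInf (bddBelow_krCosts _) ((krCosts_nonempty ha).smul_set)
    (krCosts_smul_subset c a)

noncomputable def krSeminorm (z : M) : Seminorm ℝ (diracSpan z) :=
  .ofSMulLE (fun a => sInf (krCosts z a))
    (le_antisymm (csInf_le (bddBelow_krCosts _) zero_mem_krCosts)
      (le_csInf (krCosts_nonempty (zero_mem _)) fun _ => nonneg_of_mem_krCosts))
    (fun a b => sInf_krCosts_add_le a.2 b.2) (fun c a => sInf_krCosts_smul_le c a.2)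

lemma krSeminorm_toDiracSpan_sub_le (x y : M) :
    krSeminorm z (toDiracSpan z x - toDiracSpan z y) ≤ dist x y :=
  csInf_le (bddBelow_krCosts _) (dist_mem_krCosts x y)

lemma exists_lip0_apply_eq_of_abs_le_krSeminorm (g : Module.Dual ℝ (diracSpan z))
    (hg : ∀ a, |g a| ≤ krSeminorm z a) :
    ∃ F : Lip0 z, ‖F‖ ≤ 1 ∧ ∀ a : diracSpan z, (a : StrongDual ℝ (Lip0 z)) F = g a := by
  have hlip : LipschitzWith 1 fun x => g (toDiracSpan z x) := by
    refine LipschitzWith.of_dist_le_mul fun x y => ?_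
    rw [Real.dist_eq, ← map_sub, NNReal.coe_one, one_mul]
    exact (hg _).trans (krSeminorm_toDiracSpan_sub_le x y)
  have hbase : g (toDiracSpan z z) = 0 := by
    rw [show toDiracSpan z z = 0 from Subtype.ext (dirac_self z), map_zero]
  let F : Lip0 z := ⟨_, ⟨1, hlip⟩, hbase⟩
  refine ⟨F, by exact_mod_cast Lip0.lipConst_le hlip, fun ⟨a, ha⟩ => ?_⟩
  induction ha using Submodule.span_induction with
  | mem _ hx => obtain ⟨x, rfl⟩ := hx; rfl
  | zero => exact (map_zero g).symm
  | add a b _ _ iha ihb =>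
    simp only [add_apply, iha, ihb, ← map_add]; rfl
  | smul c a _ iha =>
    simp only [smul_apply, iha, ← map_smul]; rfl

lemma krSeminorm_le_norm (a : diracSpan z) :
    krSeminorm z a ≤ ‖(a : StrongDual ℝ (Lip0 z))‖ := by
  obtain ⟨g, hg, hga⟩ := (krSeminorm z).exists_dual_abs_le_and_eq a
  obtain ⟨F, hF, hFg⟩ := exists_lip0_apply_eq_of_abs_le_krSeminorm g hg
  calc krSeminorm z a = (a : StrongDual ℝ (Lip0 z)) F := by rw [hFg, hga]
    _ ≤ ‖(a : StrongDual ℝ (Lip0 z))‖ * ‖F‖ := (le_abs_self _).trans (a.1.le_opNorm F)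
    _ ≤ ‖(a : StrongDual ℝ (Lip0 z))‖ := mul_le_of_le_one_right (norm_nonneg _) hF

end KantorovichRubinstein

/-- on the span of the Dirac functionals, the free-space (dual) norm coincides
with the Kantorovich-Rubinstein norm. -/
theorem freeSpace_norm_eq_KR {M : Type*} [MetricSpace M] (z : M)
    (a : StrongDual ℝ (Lip0 z)) (ha : a ∈ Submodule.span ℝ (Set.range (dirac z))) :
    ‖a‖ = sInf {r : ℝ | ∃ (k : ℕ) (α : Fin k → ℝ) (y w : Fin k → M),
      a = ∑ i, α i • (dirac z (y i) - dirac z (w i)) ∧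
      r = ∑ i, |α i| * dist (y i) (w i)} :=
  le_antisymm (le_csInf (krCosts_nonempty ha) fun _ => norm_le_of_mem_krCosts)
    (krSeminorm_le_norm ⟨a, ha⟩)
end

section
/- The Kantorovich-Rubinstein seminorm ‖·‖_KR is the largest seminorm ‖·‖' on span{δ_x : x ∈ M} satisfying ‖δ_x − δ_y‖' ≤ d(x,y) for all x, y ∈ M. -/
open Set Pointwise

/-- The formal Dirac element at `x` in the free vector space on `M`, with `δ_z` identified
with `0`. -/
noncomputable def diracElt {M : Type*} [MetricSpace M] (z x : M) : M →₀ ℝ :=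
  Finsupp.single x 1 - Finsupp.single z 1

/-- The Kantorovich-Rubinstein seminorm. -/
noncomputable def KRnorm {M : Type*} [MetricSpace M] (z : M) (a : M →₀ ℝ) : ℝ :=
  sInf {r : ℝ | ∃ (k : ℕ) (α : Fin k → ℝ) (y w : Fin k → M),
    a = ∑ i, α i • (diracElt z (y i) - diracElt z (w i)) ∧
    r = ∑ i, |α i| * dist (y i) (w i)}

section aux

variable {M : Type*} [MetricSpace M] (z : M)

/-- The set whose infimum is the KR norm. -/
def KRset (a : M →₀ ℝ) : Set ℝ :=
  {r : ℝ | ∃ (k : ℕ) (α : Fin k → ℝ) (y w : Fin k → M),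
    a = ∑ i, α i • (diracElt z (y i) - diracElt z (w i)) ∧
    r = ∑ i, |α i| * dist (y i) (w i)}

lemma KRnorm_eq (a : M →₀ ℝ) : KRnorm z a = sInf (KRset z a) := rfl

lemma KRset_nonneg {a : M →₀ ℝ} {r : ℝ} (hr : r ∈ KRset z a) : 0 ≤ r := by
  obtain ⟨k, α, y, w, -, rfl⟩ := hr
  exact Finset.sum_nonneg fun i _ => mul_nonneg (abs_nonneg _) dist_nonneg

lemma KRset_bddBelow (a : M →₀ ℝ) : BddBelow (KRset z a) :=
  ⟨0, fun r hr => KRset_nonneg z hr⟩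

lemma diracElt_self : diracElt z z = 0 := sub_self _

lemma KRset_nonempty {a : M →₀ ℝ}
    (ha : a ∈ Submodule.span ℝ (Set.range (diracElt z))) : (KRset z a).Nonempty := by
  obtain ⟨n, f, g, hg⟩ := Submodule.mem_span_set'.1 ha
  choose y hy using fun i => (g i).2
  refine ⟨∑ i, |f i| * dist (y i) z, n, f, y, fun _ => z, ?_, rfl⟩
  rw [← hg]
  refine Finset.sum_congr rfl fun i _ => ?_
  rw [diracElt_self, sub_zero, hy]

lemma KRset_add {a b : M →₀ ℝ} {ra rb : ℝ} (hra : ra ∈ KRset z a) (hrb : rb ∈ KRset z b) :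
    ra + rb ∈ KRset z (a + b) := by
  obtain ⟨k, α, y, w, hrep, rfl⟩ := hra
  obtain ⟨k', α', y', w', hrep', rfl⟩ := hrb
  refine ⟨k + k', Fin.append α α', Fin.append y y', Fin.append w w', ?_, ?_⟩ <;>
    simp [Fin.sum_univ_add, Fin.append_left, Fin.append_right, hrep, hrep']

lemma KRset_smul {a : M →₀ ℝ} {r : ℝ} (c : ℝ) (hr : r ∈ KRset z a) :
    |c| * r ∈ KRset z (c • a) := by
  obtain ⟨k, α, y, w, rfl, rfl⟩ := hr
  refine ⟨k, fun i => c * α i, y, w, ?_, ?_⟩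
  · rw [Finset.smul_sum]
    exact Finset.sum_congr rfl fun i _ => (mul_smul c (α i) _).symm
  · rw [Finset.mul_sum]
    exact Finset.sum_congr rfl fun i _ => by rw [abs_mul, mul_assoc]

lemma KRset_smul_eq {c : ℝ} (hc : c ≠ 0) (a : M →₀ ℝ) :
    KRset z (c • a) = |c| • KRset z a := by
  ext r
  constructor
  · intro hr
    refine ⟨|c|⁻¹ * r, ?_, ?_⟩
    · have := KRset_smul z c⁻¹ hr
      rw [inv_smul_smul₀ hc, abs_inv] at this
      exact this
    · simp [smul_eq_mul, mul_inv_cancel_left₀ (abs_ne_zero.2 hc)]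
  · rintro ⟨r', hr', rfl⟩
    exact KRset_smul z c hr'

lemma KRnorm_zero : KRnorm z (0 : M →₀ ℝ) = 0 := by
  have h0 : (0 : ℝ) ∈ KRset z (0 : M →₀ ℝ) :=
    ⟨0, Fin.elim0, Fin.elim0, Fin.elim0, by simp, by simp⟩
  exact le_antisymm (csInf_le (KRset_bddBelow z _) h0)
    (le_csInf ⟨0, h0⟩ fun r hr => KRset_nonneg z hr)

end aux

/-- `‖·‖_KR` is the largest seminorm on the span of the Dirac elements
satisfying `‖δ_x - δ_y‖' ≤ d(x,y)`. -/
theorem KR_largest_seminorm {M : Type*} [MetricSpace M] (z : M) :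
    (∀ x y : M, KRnorm z (diracElt z x - diracElt z y) ≤ dist x y) ∧
    (∀ a b : M →₀ ℝ, a ∈ Submodule.span ℝ (Set.range (diracElt z)) →
      b ∈ Submodule.span ℝ (Set.range (diracElt z)) →
      KRnorm z (a + b) ≤ KRnorm z a + KRnorm z b) ∧
    (∀ (c : ℝ) (a : M →₀ ℝ), a ∈ Submodule.span ℝ (Set.range (diracElt z)) →
      KRnorm z (c • a) = |c| * KRnorm z a) ∧
    (∀ p : Seminorm ℝ (M →₀ ℝ), (∀ x y : M, p (diracElt z x - diracElt z y) ≤ dist x y) →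
      ∀ a ∈ Submodule.span ℝ (Set.range (diracElt z)), p a ≤ KRnorm z a) := by
  refine ⟨?_, ?_, ?_, ?_⟩
  · intro x y
    refine csInf_le (KRset_bddBelow z _) ⟨1, fun _ => 1, fun _ => x, fun _ => y, by simp, by simp⟩
  · intro a b ha hb
    rw [KRnorm_eq, KRnorm_eq, KRnorm_eq, ← sub_le_iff_le_add]
    refine le_csInf (KRset_nonempty z ha) fun ra hra => ?_
    rw [sub_le_iff_le_add, ← sub_le_iff_le_add']
    refine le_csInf (KRset_nonempty z hb) fun rb hrb => ?_
    have := csInf_le (KRset_bddBelow z _) (KRset_add z hra hrb)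
    linarith
  · intro c a ha
    rcases eq_or_ne c 0 with rfl | hc
    · simp [KRnorm_zero]
    · rw [KRnorm_eq, KRnorm_eq, KRset_smul_eq z hc, Real.sInf_smul_of_nonneg (abs_nonneg c),
        smul_eq_mul]
  · intro p hp a ha
    refine le_csInf (KRset_nonempty z ha) fun r hr => ?_
    obtain ⟨k, α, y, w, rfl, rfl⟩ := hr
    calc p (∑ i, α i • (diracElt z (y i) - diracElt z (w i)))
        ≤ ∑ i, p (α i • (diracElt z (y i) - diracElt z (w i))) :=
          Finset.le_sum_of_subadditive p (map_zero p).le (fun x y => map_add_le_add p x y) _ _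
      _ ≤ ∑ i, |α i| * dist (y i) (w i) := by
          refine Finset.sum_le_sum fun i _ => ?_
          rw [map_smul_eq_mul, Real.norm_eq_abs]
          exact mul_le_mul_of_nonneg_left (hp _ _) (abs_nonneg _)
end

section
/- Let (M,d) be an unbounded metric space and let (z_n) be a sequence in M with d(z_{n+1}, 0) > 2 d(z_n, 0) for all n. Set x_n = z_{2n−1}, y_n = z_{2n}. Then for all n, m: d(x_m, y_n) ≥ (1/3)·d(x_n, y_n), and for n ≠ m the open balls U(y_n, (1/3)d(y_n,x_n)) and U(y_m, (1/3)d(y_m,x_m)) are disjoint. -/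
/-!
Write `r k = d(z_k, 0)`. Since `r` is nonnegative and more than doubles at each step, `2 r_i < r_j`
whenever `1 ≤ i < j`. Hence `x_n` is much closer to `0` than `y_n`, so the radius
`(1/3) d(y_n, x_n)` is less than `r(y_n) / 2`, while every other `x_m` and `y_m` has distance to `0`
off from `r(y_n)` by more than a factor `2`; the reverse triangle inequality does the rest.
-/

open Metric

theorem two_mul_lt_of_lt {a : ℕ → ℝ} (ha : ∀ n, 1 ≤ n → 2 * a n < a (n + 1))
    (h0 : ∀ n, 0 ≤ a n) {i j : ℕ} (hi : 1 ≤ i) (hij : i < j) : 2 * a i < a j := by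
  induction j, hij using Nat.le_induction with
  | base => exact ha i hi
  | succ k hik ih =>
    have := ha k (by omega)
    linarith [h0 k]

section Metric

variable {M : Type*} [MetricSpace M] {c x y w : M}

theorem one_third_dist_lt_half (h : 2 * dist x c < dist y c) :
    (1 / 3) * dist y x < dist y c / 2 := by
  have := dist_triangle_right y x c
  linarith

theorem half_dist_lt_dist (h : 2 * dist w c < dist y c ∨ 2 * dist y c < dist w c) :
    dist y c / 2 < dist w y := by
  have := abs_dist_sub_le w y c
  rw [abs_le] at this
  rcases h with h | h <;> linarith [dist_nonneg (x := y) (y := c)]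

theorem disjoint_ball_ball_of_three_mul_le {ρ ρ' : ℝ} (hρ : ρ ≤ dist x c / 2)
    (hρ' : ρ' ≤ dist y c / 2) (h : 3 * dist x c ≤ dist y c) : Disjoint (ball x ρ) (ball y ρ') := by
  refine ball_disjoint_ball ?_
  have := abs_dist_sub_le y x c
  rw [abs_le, dist_comm y] at this
  linarith

end Metric

/-- the unbounded case.  If `d(z_{n+1}, 0) > 2 d(z_n, 0)` and `x_n = z_{2n-1}`,
`y_n = z_{2n}`, then `d(x_m, y_n) ≥ (1/3) d(x_n, y_n)` and the balls
`U(y_n, (1/3) d(y_n, x_n))` are pairwise disjoint. -/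
theorem unbounded_case_pairs {M : Type*} [MetricSpace M] (base : M) (z : ℕ → M)
    (hgrow : ∀ n, 1 ≤ n → 2 * dist (z n) base < dist (z (n + 1)) base) :
    (∀ n m, 1 ≤ n → 1 ≤ m →
      (1 / 3) * dist (z (2 * n - 1)) (z (2 * n)) ≤ dist (z (2 * m - 1)) (z (2 * n))) ∧
    (∀ n m, 1 ≤ n → 1 ≤ m → n ≠ m →
      Disjoint (Metric.ball (z (2 * n)) ((1 / 3) * dist (z (2 * n)) (z (2 * n - 1))))
        (Metric.ball (z (2 * m)) ((1 / 3) * dist (z (2 * m)) (z (2 * m - 1))))) := by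
  have hdouble {i j : ℕ} (hi : 1 ≤ i) (hij : i < j) : 2 * dist (z i) base < dist (z j) base :=
    two_mul_lt_of_lt hgrow (fun _ => dist_nonneg) hi hij
  have hradius {n : ℕ} (hn : 1 ≤ n) :
      (1 / 3) * dist (z (2 * n)) (z (2 * n - 1)) < dist (z (2 * n)) base / 2 :=
    one_third_dist_lt_half (hdouble (by omega) (by omega))
  refine ⟨fun n m hn hm => ?_, fun n m hn hm hnm => ?_⟩
  · rw [dist_comm (z (2 * n - 1))]
    refine (hradius hn).le.trans (half_dist_lt_dist ?_).le
    rcases le_or_gt m n with hmn | hmn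
    · exact .inl (hdouble (by omega) (by omega))
    · exact .inr (hdouble (by omega) (by omega))
  · wlog hlt : n < m generalizing n m
    · exact (this m n hm hn hnm.symm (by omega)).symm
    refine disjoint_ball_ball_of_three_mul_le (hradius hn).le (hradius hm).le ?_
    have h₁ := hdouble (i := 2 * n) (j := 2 * n + 1) (by omega) (by omega)
    have h₂ := hdouble (i := 2 * n + 1) (j := 2 * m) (by omega) (by omega)
    linarith [dist_nonneg (x := z (2 * n)) (y := base)]
end

section
/- Let X be a Banach space such that ℓ1 is isomorphic to a complemented subspace of X. Then X is not isomorphic to a complemented subspace of any C(K) space. -/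
/-!
If `ℓ¹` were complemented in `C(K)`, there would be `T : C(K) → ℓ¹` and `R : ℓ¹ → C(K)` with
`T ∘ R = id`. Approximate `g n = R eₙ` (`n < N`) uniformly by combinations `∑ₜ g n t • pₜ` of one
finite partition of unity, and look at the matrix `a n t = (T pₜ)ₙ`. Testing `T` on `g n` shows
that every row has `ℓ¹`-mass at least `1 / (2‖R‖)`; testing it on `∑ₜ ±pₜ`, of norm `≤ 1`, shows
that every signed combination of the rows has `ℓ¹`-mass at most `‖T‖`. Khintchine's inequality
`‖a‖₂ ≤ √3 · 𝔼 |∑ ±aₙ|` (from the fourth moment `𝔼 (∑ ±aₙ)⁴ ≤ 3 ‖a‖₂⁴`) makes these two bounds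
incompatible as soon as `N > 12 ‖T‖² ‖R‖²`.
-/

open Finset

theorem sum_sq_pow_three_le {β : Type*} (t : Finset β) (f : β → ℝ) :
    (∑ x ∈ t, f x ^ 2) ^ 3 ≤ (∑ x ∈ t, |f x|) ^ 2 * ∑ x ∈ t, f x ^ 4 := by
  set B := ∑ x ∈ t, f x ^ 2
  set C := ∑ x ∈ t, |f x| ^ 3
  have hB : 0 ≤ B := sum_nonneg fun x _ => sq_nonneg _
  have hBC : B ^ 2 ≤ (∑ x ∈ t, |f x|) * C :=
    sum_sq_le_sum_mul_sum_of_sq_le_mul t (fun _ _ => abs_nonneg _)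
      (fun _ _ => by positivity) fun x _ => le_of_eq <| by rw [← sq_abs (f x)]; ring
  have hCD : C ^ 2 ≤ B * ∑ x ∈ t, f x ^ 4 :=
    sum_sq_le_sum_mul_sum_of_sq_le_mul t (fun _ _ => sq_nonneg _)
      (fun _ _ => by positivity) fun x _ => le_of_eq <| by
        rw [show f x ^ 4 = (f x ^ 2) ^ 2 by ring, ← sq_abs (f x)]; ring
  rcases hB.eq_or_lt with hB0 | hBpos
  · rw [← hB0, zero_pow three_ne_zero]; positivity
  refine le_of_mul_le_mul_left ?_ hBpos
  calc B * B ^ 3 = (B ^ 2) ^ 2 := by ring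
    _ ≤ ((∑ x ∈ t, |f x|) * C) ^ 2 := pow_le_pow_left₀ (sq_nonneg B) hBC 2
    _ = (∑ x ∈ t, |f x|) ^ 2 * C ^ 2 := by ring
    _ ≤ (∑ x ∈ t, |f x|) ^ 2 * (B * ∑ x ∈ t, f x ^ 4) := by gcongr
    _ = B * ((∑ x ∈ t, |f x|) ^ 2 * ∑ x ∈ t, f x ^ 4) := by ring

section Khintchine

variable {ι : Type*} [DecidableEq ι]

def signedSum (s σ : Finset ι) (a : ι → ℝ) : ℝ :=
  ∑ n ∈ s, (if n ∈ σ then 1 else -1) * a n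

theorem sum_powerset_insert_signedSum {s : Finset ι} {i : ι} (hi : i ∉ s) (a : ι → ℝ)
    (F : ℝ → ℝ) :
    ∑ σ ∈ (insert i s).powerset, F (signedSum (insert i s) σ a) =
      ∑ σ ∈ s.powerset, (F (signedSum s σ a - a i) + F (signedSum s σ a + a i)) := by
  have hsign : ∀ σ : Finset ι, ∑ n ∈ s, (if n ∈ insert i σ then (1 : ℝ) else -1) * a n =
      ∑ n ∈ s, (if n ∈ σ then 1 else -1) * a n :=
    fun σ => sum_congr rfl fun n hn => by
      simp only [mem_insert, ne_of_mem_of_not_mem hn hi, false_or]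
  rw [sum_powerset_insert hi, ← sum_add_distrib]
  refine sum_congr rfl fun σ hσ => ?_
  have hiσ : i ∉ σ := fun h => hi (mem_powerset.1 hσ h)
  simp only [signedSum, sum_insert hi, if_neg hiσ, mem_insert_self, if_true, hsign]
  congr 2 <;> ring

theorem sum_powerset_signedSum_sq (s : Finset ι) (a : ι → ℝ) :
    ∑ σ ∈ s.powerset, signedSum s σ a ^ 2 = 2 ^ #s * ∑ n ∈ s, a n ^ 2 := by
  induction s using Finset.induction_on with
  | empty => simp [signedSum]
  | @insert i s hi ih =>
    have hpair : ∀ x : ℝ, (x - a i) ^ 2 + (x + a i) ^ 2 = 2 * x ^ 2 + 2 * a i ^ 2 :=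
      fun x => by ring
    simp only [sum_powerset_insert_signedSum hi a (· ^ 2), hpair, sum_add_distrib, ← mul_sum,
      ih, sum_const, card_powerset, card_insert_of_notMem hi, sum_insert hi, nsmul_eq_mul]
    push_cast
    ring

theorem sum_powerset_signedSum_pow_four_le (s : Finset ι) (a : ι → ℝ) :
    ∑ σ ∈ s.powerset, signedSum s σ a ^ 4 ≤ 3 * 2 ^ #s * (∑ n ∈ s, a n ^ 2) ^ 2 := by
  induction s using Finset.induction_on with
  | empty => simp [signedSum]
  | @insert i s hi ih =>
    have hpair : ∀ x : ℝ, (x - a i) ^ 4 + (x + a i) ^ 4 =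
        2 * x ^ 4 + 12 * a i ^ 2 * x ^ 2 + 2 * a i ^ 4 := fun x => by ring
    simp only [sum_powerset_insert_signedSum hi a (· ^ 4), hpair, sum_add_distrib, ← mul_sum,
      sum_powerset_signedSum_sq, sum_const, card_powerset, card_insert_of_notMem hi,
      sum_insert hi, nsmul_eq_mul]
    have h2 : (0 : ℝ) < 2 ^ #s := by positivity
    push_cast
    rw [pow_succ (2 : ℝ)]
    nlinarith [mul_nonneg h2.le (pow_nonneg (sq_nonneg (a i)) 2)]

theorem khintchine_sq (s : Finset ι) (a : ι → ℝ) :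
    (2 ^ #s) ^ 2 * ∑ n ∈ s, a n ^ 2 ≤ 3 * (∑ σ ∈ s.powerset, |signedSum s σ a|) ^ 2 := by
  set Q := ∑ n ∈ s, a n ^ 2
  have hQ : 0 ≤ Q := sum_nonneg fun n _ => sq_nonneg _
  have hmoments := sum_sq_pow_three_le s.powerset (signedSum s · a)
  rw [sum_powerset_signedSum_sq] at hmoments
  have h4 := sum_powerset_signedSum_pow_four_le s a
  rcases hQ.eq_or_lt with hQ0 | hQpos
  · rw [← hQ0, mul_zero]; positivity
  refine le_of_mul_le_mul_right ?_ (by positivity : (0 : ℝ) < 2 ^ #s * Q ^ 2)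
  calc (2 ^ #s) ^ 2 * Q * (2 ^ #s * Q ^ 2) = (2 ^ #s * Q) ^ 3 := by ring
    _ ≤ _ := hmoments
    _ ≤ (∑ σ ∈ s.powerset, |signedSum s σ a|) ^ 2 * (3 * 2 ^ #s * Q ^ 2) := by gcongr
    _ = _ := by ring

theorem two_pow_card_mul_sum_abs_le (s : Finset ι) (a : ι → ℝ) :
    2 ^ #s * ∑ n ∈ s, |a n| ≤ √(3 * #s) * ∑ σ ∈ s.powerset, |signedSum s σ a| := by
  have hl1l2 : (∑ n ∈ s, |a n|) ^ 2 ≤ #s * ∑ n ∈ s, a n ^ 2 := by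
    simpa only [sq_abs] using sq_sum_le_card_mul_sum_sq (s := s) (f := fun n => |a n|)
  refine le_of_pow_le_pow_left₀ two_ne_zero (by positivity) ?_
  calc (2 ^ #s * ∑ n ∈ s, |a n|) ^ 2 ≤ (2 ^ #s) ^ 2 * (#s * ∑ n ∈ s, a n ^ 2) := by
        rw [mul_pow]; gcongr
    _ = #s * ((2 ^ #s) ^ 2 * ∑ n ∈ s, a n ^ 2) := by ring
    _ ≤ #s * (3 * (∑ σ ∈ s.powerset, |signedSum s σ a|) ^ 2) :=
        mul_le_mul_of_nonneg_left (khintchine_sq s a) (by positivity)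
    _ = _ := by rw [mul_pow, Real.sq_sqrt (by positivity)]; ring

theorem card_mul_sq_le_of_signedSum_le {β : Type*} (s : Finset ι) (I : Finset β)
    (a : ι → β → ℝ) {δ τ : ℝ} (hδ : 0 ≤ δ) (hrow : ∀ n ∈ s, δ ≤ ∑ t ∈ I, |a n t|)
    (hcol : ∀ σ ∈ s.powerset, ∑ t ∈ I, |signedSum s σ (a · t)| ≤ τ) :
    #s * δ ^ 2 ≤ 3 * τ ^ 2 := by
  have h2 : (0 : ℝ) < 2 ^ #s := by positivity
  have hmass : 2 ^ #s * (#s * δ) ≤ 2 ^ #s * (√(3 * #s) * τ) := calc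
    2 ^ #s * (#s * δ) ≤ 2 ^ #s * ∑ t ∈ I, ∑ n ∈ s, |a n t| := by
        rw [sum_comm]; gcongr
        simpa using sum_le_sum hrow
    _ = ∑ t ∈ I, 2 ^ #s * ∑ n ∈ s, |a n t| := mul_sum _ _ _
    _ ≤ ∑ t ∈ I, √(3 * #s) * ∑ σ ∈ s.powerset, |signedSum s σ (a · t)| :=
        sum_le_sum fun t _ => two_pow_card_mul_sum_abs_le s (a · t)
    _ = √(3 * #s) * ∑ σ ∈ s.powerset, ∑ t ∈ I, |signedSum s σ (a · t)| := by
        rw [← mul_sum, sum_comm]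
    _ ≤ √(3 * #s) * ∑ σ ∈ s.powerset, τ := by gcongr with σ hσ; exact hcol σ hσ
    _ = 2 ^ #s * (√(3 * #s) * τ) := by
        rw [sum_const, card_powerset, nsmul_eq_mul]; push_cast; ring
  have hsq := pow_le_pow_left₀ (by positivity) (le_of_mul_le_mul_left hmass h2) 2
  rw [mul_pow, mul_pow, Real.sq_sqrt (by positivity)] at hsq
  rcases (Nat.cast_nonneg (α := ℝ) #s).eq_or_lt with h0 | hpos
  · rw [← h0, zero_mul]; positivity
  nlinarith

end Khintchine

theorem exists_comp_eq_id_of_projection {R E F : Type*} [Semiring R] [TopologicalSpace E]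
    [AddCommMonoid E] [Module R E] [TopologicalSpace F] [AddCommMonoid F] [Module R F]
    (Y : Submodule R E) (P : E →L[R] E) (hPY : ∀ v, P v ∈ Y) (hP : ∀ v ∈ Y, P v = v)
    (e : Y ≃L[R] F) :
    ∃ (T : E →L[R] F) (S : F →L[R] E), T ∘L S = ContinuousLinearMap.id R F :=
  ⟨e ∘L P.codRestrict Y hPY, Y.subtypeL ∘L e.symm, by
    ext x
    have hx : P.codRestrict Y hPY (e.symm x) = e.symm x := Subtype.ext (hP _ (e.symm x).2)
    simp [hx]⟩

theorem lp.sum_abs_le_norm_of_one {α : Type*} (x : lp (fun _ : α => ℝ) 1) (s : Finset α) :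
    ∑ n ∈ s, |x n| ≤ ‖x‖ := by
  simpa using lp.sum_rpow_le_norm_rpow (by norm_num) x s

@[simp]
theorem lp.evalCLM_apply {α : Type*} (n : α) (x : lp (fun _ : α => ℝ) 1) :
    lp.evalCLM ℝ (fun _ : α => ℝ) 1 n x = x n :=
  rfl

theorem lp.norm_evalCLM_le {α : Type*} (n : α) : ‖lp.evalCLM ℝ (fun _ : α => ℝ) 1 n‖ ≤ 1 :=
  LinearMap.mkContinuous_norm_le _ zero_le_one _

theorem norm_sum_smul_evalCLM_comp_le {α E : Type*} [SeminormedAddCommGroup E]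
    [NormedSpace ℝ E] (T : E →L[ℝ] lp (fun _ : α => ℝ) 1) (s : Finset α) {c : α → ℝ}
    (hc : ∀ n, |c n| ≤ 1) :
    ‖∑ n ∈ s, c n • (lp.evalCLM ℝ (fun _ : α => ℝ) 1 n ∘L T)‖ ≤ ‖T‖ := by
  refine ContinuousLinearMap.opNorm_le_bound _ (norm_nonneg T) fun f => ?_
  calc ‖(∑ n ∈ s, c n • (lp.evalCLM ℝ (fun _ : α => ℝ) 1 n ∘L T)) f‖
      = |∑ n ∈ s, c n * T f n| := by simp
    _ ≤ ∑ n ∈ s, |T f n| := (abs_sum_le_sum_abs _ _).trans <| sum_le_sum fun n _ => by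
        rw [abs_mul]; exact mul_le_of_le_one_left (abs_nonneg _) (hc n)
    _ ≤ ‖T f‖ := lp.sum_abs_le_norm_of_one _ s
    _ ≤ ‖T‖ * ‖f‖ := T.le_opNorm f

section CompactSpace

variable {K : Type*} [TopologicalSpace K] [CompactSpace K]

theorem sum_abs_apply_le_opNorm {β : Type*} (φ : C(K, ℝ) →L[ℝ] ℝ) (I : Finset β)
    (p : β → C(K, ℝ)) (hp0 : ∀ t u, 0 ≤ p t u) (hp1 : ∀ u, ∑ t ∈ I, p t u ≤ 1) :
    ∑ t ∈ I, |φ (p t)| ≤ ‖φ‖ := by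
  set c : β → ℝ := fun t => SignType.sign (φ (p t))
  have hF : ‖∑ t ∈ I, c t • p t‖ ≤ 1 := by
    refine (ContinuousMap.norm_le _ zero_le_one).2 fun u => ?_
    calc ‖(∑ t ∈ I, c t • p t) u‖ = |∑ t ∈ I, c t * p t u| := by simp
      _ ≤ ∑ t ∈ I, p t u := (abs_sum_le_sum_abs _ _).trans <| sum_le_sum fun t _ => by
          rw [abs_mul, abs_of_nonneg (hp0 t u)]
          refine mul_le_of_le_one_left (hp0 t u) ?_
          simp only [c]
          cases SignType.sign (φ (p t)) <;> simp
      _ ≤ 1 := hp1 u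
  calc ∑ t ∈ I, |φ (p t)| = φ (∑ t ∈ I, c t • p t) := by simp [c, sign_mul_self]
    _ ≤ ‖φ (∑ t ∈ I, c t • p t)‖ := le_abs_self _
    _ ≤ ‖φ‖ * ‖∑ t ∈ I, c t • p t‖ := φ.le_opNorm _
    _ ≤ ‖φ‖ := mul_le_of_le_one_right φ.opNorm_nonneg hF

theorem abs_apply_le_of_norm_sub_sum_le (φ : C(K, ℝ) →L[ℝ] ℝ) (g : C(K, ℝ)) (I : Finset K)
    (p : K → C(K, ℝ)) {η : ℝ} (hη : ‖g - ∑ t ∈ I, g t • p t‖ ≤ η) :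
    |φ g| ≤ ‖φ‖ * η + ‖g‖ * ∑ t ∈ I, |φ (p t)| := by
  have hsplit : φ g = φ (g - ∑ t ∈ I, g t • p t) + ∑ t ∈ I, g t * φ (p t) := by
    simp [map_sub, map_sum]
  rw [hsplit]
  refine (abs_add_le _ _).trans (add_le_add ?_ ?_)
  · exact (φ.le_opNorm _).trans (mul_le_mul_of_nonneg_left hη (norm_nonneg _))
  · rw [mul_sum]
    refine (abs_sum_le_sum_abs _ _).trans (sum_le_sum fun t _ => ?_)
    rw [abs_mul]
    exact mul_le_mul_of_nonneg_right (g.norm_coe_le_norm t) (abs_nonneg _)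

theorem abs_coord_le_of_norm_sub_sum_le {α : Type*} (T : C(K, ℝ) →L[ℝ] lp (fun _ : α => ℝ) 1)
    (n : α) {g : C(K, ℝ)} (I : Finset K) (p : K → C(K, ℝ)) {η : ℝ}
    (hη : ‖g - ∑ t ∈ I, g t • p t‖ ≤ η) :
    |T g n| ≤ ‖T‖ * η + ‖g‖ * ∑ t ∈ I, |T (p t) n| := by
  have hφ : ‖lp.evalCLM ℝ (fun _ : α => ℝ) 1 n ∘L T‖ ≤ ‖T‖ :=
    (ContinuousLinearMap.opNorm_comp_le _ T).trans <|
      mul_le_of_le_one_left T.opNorm_nonneg (lp.norm_evalCLM_le n)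
  have h := abs_apply_le_of_norm_sub_sum_le (lp.evalCLM ℝ (fun _ : α => ℝ) 1 n ∘L T) g I p hη
  simp only [ContinuousLinearMap.comp_apply, lp.evalCLM_apply] at h
  refine h.trans ?_
  gcongr
  exact (norm_nonneg _).trans hη

theorem sum_abs_signedSum_coord_le_opNorm {α β : Type*} [DecidableEq α]
    (T : C(K, ℝ) →L[ℝ] lp (fun _ : α => ℝ) 1) (s σ : Finset α) (I : Finset β)
    (p : β → C(K, ℝ)) (hp0 : ∀ t u, 0 ≤ p t u) (hp1 : ∀ u, ∑ t ∈ I, p t u ≤ 1) :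
    ∑ t ∈ I, |signedSum s σ (fun n => T (p t) n)| ≤ ‖T‖ := by
  have hc : ∀ n, |(if n ∈ σ then 1 else -1 : ℝ)| ≤ 1 := fun n => by split_ifs <;> simp
  refine le_trans (le_of_eq ?_) <| (sum_abs_apply_le_opNorm _ I p hp0 hp1).trans
    (norm_sum_smul_evalCLM_comp_le T s hc)
  simp only [signedSum, _root_.sum_apply, smul_apply, ContinuousLinearMap.comp_apply,
    lp.evalCLM_apply, smul_eq_mul]

end CompactSpace

section CompactT2

variable {K : Type*} [TopologicalSpace K] [CompactSpace K] [T2Space K]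

theorem exists_finset_partition_approx {E : Type*} [SeminormedAddCommGroup E] [NormedSpace ℝ E]
    {f : K → E} (hf : Continuous f) {η : ℝ} (hη : 0 < η) :
    ∃ (I : Finset K) (p : K → C(K, ℝ)), (∀ t u, 0 ≤ p t u) ∧ (∀ u, ∑ t ∈ I, p t u = 1) ∧
      ∀ u, ‖f u - ∑ t ∈ I, p t u • f t‖ ≤ η := by
  classical
  set V : K → Set K := fun t => f ⁻¹' Metric.ball (f t) η
  have hVopen : ∀ t, IsOpen (V t) := fun t => Metric.isOpen_ball.preimage hf
  obtain ⟨I, hI⟩ := isCompact_univ.elim_finite_subcover V hVopen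
    fun t _ => Set.mem_iUnion.2 ⟨t, Metric.mem_ball_self hη⟩
  obtain ⟨p, hp⟩ := PartitionOfUnity.exists_isSubordinate isClosed_univ
    (fun t => if t ∈ I then V t else ∅) (fun t => by split_ifs <;> simp [hVopen])
    fun u _ => by simpa using hI (Set.mem_univ u)
  have hpV : ∀ t u, p t u ≠ 0 → t ∈ I ∧ u ∈ V t := fun t u hu => by
    have : u ∈ if t ∈ I then V t else ∅ := hp t (subset_tsupport _ hu)
    split_ifs at this with ht
    exacts [⟨ht, this⟩, this.elim]
  have hsum : ∀ u, ∑ t ∈ I, p t u = 1 := fun u => by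
    rw [← p.sum_eq_one (Set.mem_univ u), finsum_eq_sum_of_support_subset]
    exact fun t ht => (hpV t u ht).1
  refine ⟨I, fun t => p t, fun t u => p.nonneg t u, hsum, fun u => ?_⟩
  calc ‖f u - ∑ t ∈ I, p t u • f t‖ = ‖∑ t ∈ I, p t u • (f u - f t)‖ := by
        simp only [smul_sub, sum_sub_distrib, ← sum_smul, hsum u, one_smul]
    _ ≤ ∑ t ∈ I, p t u * η := (norm_sum_le _ _).trans <| sum_le_sum fun t _ => by
        rw [norm_smul, Real.norm_of_nonneg (p.nonneg t u)]
        rcases eq_or_ne (p t u) 0 with h | h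
        · simp [h]
        · exact mul_le_mul_of_nonneg_left (mem_ball_iff_norm.1 (hpV t u h).2).le (p.nonneg t u)
    _ = η := by rw [← sum_mul, hsum u, one_mul]

theorem exists_finset_partition_approx_family {ι : Type*} (s : Finset ι) (g : ι → C(K, ℝ))
    {η : ℝ} (hη : 0 < η) :
    ∃ (I : Finset K) (p : K → C(K, ℝ)), (∀ t u, 0 ≤ p t u) ∧ (∀ u, ∑ t ∈ I, p t u = 1) ∧
      ∀ n ∈ s, ‖g n - ∑ t ∈ I, g n t • p t‖ ≤ η := by
  obtain ⟨I, p, hp0, hp1, hf⟩ :=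
    exists_finset_partition_approx (f := fun u (n : s) => g n u) (by fun_prop) hη
  refine ⟨I, p, hp0, hp1, fun n hn => (ContinuousMap.norm_le _ hη.le).2 fun u => ?_⟩
  refine le_trans ?_ ((norm_le_pi_norm _ ⟨n, hn⟩).trans (hf u))
  simp [mul_comm]

theorem comp_ne_id_lp_one_continuousMap (T : C(K, ℝ) →L[ℝ] lp (fun _ : ℕ => ℝ) 1)
    (R : lp (fun _ : ℕ => ℝ) 1 →L[ℝ] C(K, ℝ)) : T ∘L R ≠ ContinuousLinearMap.id ℝ _ := by
  intro hTR
  set τ := ‖T‖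
  set ρ := ‖R‖
  set e : ℕ → lp (fun _ : ℕ => ℝ) 1 := fun n => lp.single 1 n 1
  have he : ∀ n, ‖e n‖ = 1 := fun n => by simp [e, lp.norm_single]
  have hTRe : ∀ n, T (R (e n)) = e n := fun n => DFunLike.congr_fun hTR (e n)
  have hRe : ∀ n, ‖R (e n)‖ ≤ ρ := fun n => by simpa [he] using R.le_opNorm (e n)
  have hτρ : 1 ≤ τ * ρ := by simpa [he, hTRe] using T.le_opNorm_of_le (hRe 0)
  have hτ : 0 < τ := T.opNorm_nonneg.lt_of_ne' fun h => by simp [τ, h] at hτρ; linarith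
  have hρ : 0 < ρ := R.opNorm_nonneg.lt_of_ne' fun h => by simp [ρ, h] at hτρ; linarith
  set N := ⌈12 * τ ^ 2 * ρ ^ 2⌉₊ + 1
  obtain ⟨I, p, hp0, hp1, happrox⟩ := exists_finset_partition_approx_family (range N)
    (fun n => R (e n)) (η := 1 / (2 * τ)) (by positivity)
  have hrow : ∀ n ∈ range N, 1 / (2 * ρ) ≤ ∑ t ∈ I, |T (p t) n| := by
    intro n hn
    have h := abs_coord_le_of_norm_sub_sum_le T n I p (happrox n hn)
    have hS : 0 ≤ ∑ t ∈ I, |T (p t) n| := sum_nonneg fun t _ => abs_nonneg _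
    have hhalf : τ * (1 / (2 * τ)) = 1 / 2 := by field_simp
    simp only [hTRe, e, lp.single_apply_self, abs_one] at h
    rw [hhalf] at h
    rw [div_le_iff₀ (by positivity)]
    nlinarith [mul_le_mul_of_nonneg_right (hRe n) hS]
  have hN := card_mul_sq_le_of_signedSum_le (range N) I (fun n t => T (p t) n) (by positivity)
    hrow fun σ _ => sum_abs_signedSum_coord_le_opNorm T (range N) σ I p hp0 fun u => (hp1 u).le
  rw [card_range, div_pow, one_pow, mul_one_div, div_le_iff₀ (by positivity)] at hN
  have hN' : 12 * τ ^ 2 * ρ ^ 2 < N := by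
    push_cast [N]
    linarith [Nat.le_ceil (12 * τ ^ 2 * ρ ^ 2)]
  linarith

end CompactT2

theorem not_complemented_in_CK_general {X : Type*} [NormedAddCommGroup X] [NormedSpace ℝ X]
    (h : ∃ (Y : Submodule ℝ X) (P : X →L[ℝ] X), (∀ v, P v ∈ Y) ∧ (∀ v ∈ Y, P v = v) ∧
      Nonempty (↥Y ≃L[ℝ] lp (fun _ : ℕ => ℝ) 1))
    (K : Type*) [TopologicalSpace K] [CompactSpace K] [T2Space K] :
    ¬ ∃ (Z : Submodule ℝ C(K, ℝ)) (Q : C(K, ℝ) →L[ℝ] C(K, ℝ)),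
      (∀ v, Q v ∈ Z) ∧ (∀ v ∈ Z, Q v = v) ∧ Nonempty (↥Z ≃L[ℝ] X) := by
  rintro ⟨Z, Q, hQZ, hQ, ⟨e⟩⟩
  obtain ⟨Y, P, hPY, hP, ⟨i⟩⟩ := h
  obtain ⟨A, B, hAB⟩ := exists_comp_eq_id_of_projection Z Q hQZ hQ e
  obtain ⟨S, U, hSU⟩ := exists_comp_eq_id_of_projection Y P hPY hP i
  refine comp_ne_id_lp_one_continuousMap (S ∘L A) (B ∘L U) ?_
  rw [ContinuousLinearMap.comp_assoc, ← ContinuousLinearMap.comp_assoc A, hAB,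
    ContinuousLinearMap.id_comp, hSU]

/-- a Banach space containing a complemented copy of `ℓ_1` is not isomorphic to
a complemented subspace of any `C(K)` space. -/
theorem not_complemented_in_CK {X : Type*} [NormedAddCommGroup X] [NormedSpace ℝ X]
    [CompleteSpace X]
    (h : ∃ (Y : Submodule ℝ X) (P : X →L[ℝ] X), (∀ v, P v ∈ Y) ∧ (∀ v ∈ Y, P v = v) ∧
      Nonempty (↥Y ≃L[ℝ] lp (fun _ : ℕ => ℝ) 1))
    (K : Type*) [TopologicalSpace K] [CompactSpace K] [T2Space K] :
    ¬ ∃ (Z : Submodule ℝ C(K, ℝ)) (Q : C(K, ℝ) →L[ℝ] C(K, ℝ)),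
      (∀ v, Q v ∈ Z) ∧ (∀ v ∈ Z, Q v = v) ∧ Nonempty (↥Z ≃L[ℝ] X) :=
  not_complemented_in_CK_general h K
end

section
/- Let A ⊂ ℝⁿ be a finite set and f : A → ℝ a 1-Lipschitz function (Euclidean norm). For every ε > 0 there exists g ∈ C¹(ℝⁿ) extending f with ‖g‖_∞ < max{‖f‖_∞, 1} + ε and g being (1 + ε)-Lipschitz (hence all partial derivatives bounded by 1 + ε in absolute value). -/
/-!
Extend `f` to a `1`-Lipschitz function `F` on `ℝⁿ` (McShane) and truncate it at `‖f‖_∞`. Mollifying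
gives a smooth `G = ψ ⋆ F` which is still `1`-Lipschitz, being an average of translates of `F`, and
`δ`-close to `F`. The error `f a - G a` at the points of `A` is removed by adding
`∑ a, (f a - G a) φ (x - a)`, where `φ` is a bump equal to `1` at `0` and vanishing outside a ball
smaller than the separation of `A`. This costs at most `|A| δ Lip(φ)` in the Lipschitz constant and
`|A| δ` in the sup norm, so a small enough `δ` gives the claim.
-/

open MeasureTheory Metric ContinuousLinearMap
open scoped Convolution NNReal ContDiff

theorem LipschitzOnWith.exists_lipschitzWith_eqOn_abs_le {α : Type*} [PseudoMetricSpace α]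
    {f : α → ℝ} {s : Set α} {K : ℝ≥0} {M : ℝ} (hf : LipschitzOnWith K f s) (hM₀ : 0 ≤ M)
    (hM : ∀ a ∈ s, |f a| ≤ M) :
    ∃ F : α → ℝ, LipschitzWith K F ∧ Set.EqOn f F s ∧ ∀ x, |F x| ≤ M := by
  obtain ⟨F, hF, hfF⟩ := hf.extend_real
  refine ⟨fun x => max (-M) (min (F x) M), (hF.min_const M).const_max (-M), fun a ha => ?_,
    fun x => abs_le.mpr ⟨le_max_left _ _, max_le (by linarith) (min_le_right _ _)⟩⟩
  obtain ⟨h₁, h₂⟩ := abs_le.mp (hM a ha)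
  simp only [← hfF ha, min_eq_left h₂, max_eq_right h₁]

section Mollification

variable {E F : Type*} [NormedAddCommGroup E] [NormedSpace ℝ E] [FiniteDimensional ℝ E]
  [NormedAddCommGroup F] [NormedSpace ℝ F]

theorem ContDiffBump.lipschitzWith_normed_convolution [MeasurableSpace E] [BorelSpace E]
    {μ : Measure E} [μ.IsAddHaarMeasure] (φ : ContDiffBump (0 : E)) {K : ℝ≥0} {f : E → F}
    (hf : LipschitzWith K f) : LipschitzWith K (φ.normed μ ⋆[lsmul ℝ ℝ, μ] f) := by
  have hint : ∀ x, Integrable (fun t => φ.normed μ t • f (x - t)) μ := fun x =>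
    (φ.continuous_normed.smul (hf.continuous.comp (continuous_sub_left x))
      ).integrable_of_hasCompactSupport φ.hasCompactSupport_normed.smul_right
  refine LipschitzWith.of_dist_le_mul fun x y => ?_
  simp only [convolution_lsmul, dist_eq_norm, ← integral_sub (hint x) (hint y), ← smul_sub]
  calc ‖∫ t, φ.normed μ t • (f (x - t) - f (y - t)) ∂μ‖
      ≤ ∫ t, φ.normed μ t * (K * ‖x - y‖) ∂μ := by
        refine norm_integral_le_of_norm_le (φ.integrable_normed.mul_const _)
          (.of_forall fun t => ?_)
        rw [norm_smul, Real.norm_of_nonneg (φ.nonneg_normed t)]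
        refine mul_le_mul_of_nonneg_left ?_ (φ.nonneg_normed t)
        simpa [dist_eq_norm] using hf.dist_le_mul (x - t) (y - t)
    _ = K * ‖x - y‖ := by rw [integral_mul_const, φ.integral_normed, one_mul]

theorem LipschitzWith.exists_contDiff_lipschitzWith_dist_le [CompleteSpace F] {K : ℝ≥0}
    {f : E → F} (hf : LipschitzWith K f) {ε : ℝ} (hε : 0 < ε) :
    ∃ g : E → F, ContDiff ℝ ∞ g ∧ LipschitzWith K g ∧ ∀ x, dist (g x) (f x) ≤ ε := by
  borelize E
  set r := ε / (K + 1)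
  have hr : 0 < r := by positivity
  let φ : ContDiffBump (0 : E) := ⟨r / 2, r, half_pos hr, half_lt_self hr⟩
  refine ⟨φ.normed Measure.addHaar ⋆[lsmul ℝ ℝ, Measure.addHaar] f,
    φ.hasCompactSupport_normed.contDiff_convolution_left _ φ.contDiff_normed
      hf.continuous.locallyIntegrable,
    φ.lipschitzWith_normed_convolution hf,
    fun x => φ.dist_normed_convolution_le hf.continuous.aestronglyMeasurable fun y hy => ?_⟩
  calc dist (f y) (f x) ≤ K * r := hf.dist_le_mul_of_le (mem_ball.mp hy).le
    _ ≤ ε := by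
      rw [mul_div_assoc']
      exact div_le_of_le_mul₀ (by positivity) hε.le (by linarith)

end Mollification

theorem LipschitzWith.finset_sum {ι α E : Type*} [PseudoEMetricSpace α]
    [SeminormedAddCommGroup E] (s : Finset ι) {f : ι → α → E} {K : ι → ℝ≥0}
    (hf : ∀ i ∈ s, LipschitzWith (K i) (f i)) :
    LipschitzWith (∑ i ∈ s, K i) fun x => ∑ i ∈ s, f i x := by
  classical
  induction s using Finset.induction with
  | empty => simpa using LipschitzWith.const (0 : E)
  | insert a s ha ih =>
    simp only [Finset.sum_insert ha]
    exact (hf a (s.mem_insert_self a)).add (ih fun i hi => hf i (Finset.mem_insert_of_mem hi))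

theorem Finset.exists_pos_le_dist {E : Type*} [MetricSpace E] (s : Finset E) :
    ∃ r > 0, ∀ a ∈ s, ∀ b ∈ s, a ≠ b → r ≤ dist a b := by
  classical
  let D := insert 1 (s.offDiag.image fun p => dist p.1 p.2)
  refine ⟨D.min' (insert_nonempty _ _), ?_, fun a ha b hb hab => D.min'_le _ ?_⟩
  · rw [gt_iff_lt, Finset.lt_min'_iff]
    simp only [D, mem_insert, mem_image, mem_offDiag]
    rintro _ (rfl | ⟨⟨a, b⟩, ⟨-, -, hab⟩, rfl⟩)
    exacts [one_pos, dist_pos.mpr hab]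
  · simp only [D, mem_insert, mem_image, mem_offDiag]
    exact .inr ⟨(a, b), ⟨ha, hb, hab⟩, rfl⟩

section Interpolation

variable {E : Type*} [NormedAddCommGroup E] [NormedSpace ℝ E] [HasContDiffBump E]

theorem Finset.exists_contDiffBump_apply_sub_eq_zero (s : Finset E) :
    ∃ φ : ContDiffBump (0 : E), ∀ a ∈ s, ∀ b ∈ s, a ≠ b → φ (a - b) = 0 := by
  obtain ⟨r, hr, hs⟩ := s.exists_pos_le_dist
  refine ⟨⟨r / 2, r, half_pos hr, half_lt_self hr⟩,
    fun a ha b hb hab => ContDiffBump.zero_of_le_dist _ ?_⟩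
  simpa [dist_eq_norm] using hs a ha b hb hab

namespace ContDiffBump

noncomputable def interpolant (φ : ContDiffBump (0 : E)) (s : Finset E) (c : E → ℝ) (x : E) :
    ℝ :=
  ∑ a ∈ s, c a * φ (x - a)

variable (φ : ContDiffBump (0 : E)) {s : Finset E} {c : E → ℝ}

theorem contDiff_interpolant {n : ℕ∞} : ContDiff ℝ n (φ.interpolant s c) :=
  ContDiff.sum fun _ _ => contDiff_const.mul (φ.contDiff.comp (contDiff_id.sub contDiff_const))

theorem interpolant_apply_of_mem (hφ : ∀ a ∈ s, ∀ b ∈ s, a ≠ b → φ (a - b) = 0) {a : E}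
    (ha : a ∈ s) : φ.interpolant s c a = c a := by
  rw [interpolant, Finset.sum_eq_single_of_mem a ha fun b hb hba => by
      rw [hφ a ha b hb hba.symm, mul_zero],
    sub_self, φ.one_of_mem_closedBall (mem_closedBall_self φ.rIn_pos.le), mul_one]

theorem abs_interpolant_le {δ : ℝ} (hc : ∀ a ∈ s, |c a| ≤ δ) (x : E) :
    |φ.interpolant s c x| ≤ s.card * δ := by
  calc |φ.interpolant s c x| ≤ ∑ a ∈ s, |c a * φ (x - a)| := Finset.abs_sum_le_sum_abs _ _
    _ ≤ ∑ _a ∈ s, δ := Finset.sum_le_sum fun a ha => by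
      rw [abs_mul, abs_of_nonneg φ.nonneg]
      exact (mul_le_of_le_one_right (abs_nonneg _) φ.le_one).trans (hc a ha)
    _ = s.card * δ := by rw [Finset.sum_const, nsmul_eq_mul]

theorem lipschitzWith_interpolant {L δ : ℝ≥0} (hφ : LipschitzWith L φ)
    (hc : ∀ a ∈ s, |c a| ≤ δ) : LipschitzWith (s.card * δ * L) (φ.interpolant s c) := by
  have hterm : ∀ a ∈ s, LipschitzWith (‖c a‖₊ * (L * 1)) fun x => c a * φ (x - a) := fun a _ =>
    (lipschitzWith_smul (c a)).comp (hφ.comp (IsometryEquiv.subRight a).isometry.lipschitz)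
  refine (LipschitzWith.finset_sum s hterm).weaken ?_
  calc ∑ a ∈ s, ‖c a‖₊ * (L * 1) ≤ ∑ _a ∈ s, δ * L :=
        Finset.sum_le_sum fun a ha => by
          rw [mul_one]
          gcongr
          rw [← NNReal.coe_le_coe, coe_nnnorm, Real.norm_eq_abs]
          exact hc a ha
    _ = s.card * δ * L := by rw [Finset.sum_const, nsmul_eq_mul, mul_assoc]

end ContDiffBump

end Interpolation

theorem LipschitzWith.abs_fderiv_single_le {n : ℕ} {g : EuclideanSpace ℝ (Fin n) → ℝ}
    {K : ℝ≥0} (hg : LipschitzWith K g) (x : EuclideanSpace ℝ (Fin n)) (i : Fin n) :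
    |fderiv ℝ g x (EuclideanSpace.single i 1)| ≤ K := by
  calc |fderiv ℝ g x (EuclideanSpace.single i 1)|
      ≤ ‖fderiv ℝ g x‖ * ‖EuclideanSpace.single i (1 : ℝ)‖ := (fderiv ℝ g x).le_opNorm _
    _ ≤ K := by
      rw [PiLp.norm_single, norm_one, mul_one]
      exact norm_fderiv_le_of_lipschitz ℝ hg

/-- `C¹`-extension of Lipschitz functions on finite subsets of `ℝⁿ`. -/
theorem c1_extension_finite (n : ℕ) (s : Finset (EuclideanSpace ℝ (Fin n))) (hs : s.Nonempty)
    (f : EuclideanSpace ℝ (Fin n) → ℝ) (hf : LipschitzOnWith 1 f ↑s) (ε : ℝ≥0) (hε : 0 < ε) :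
    ∃ g : EuclideanSpace ℝ (Fin n) → ℝ, ContDiff ℝ 1 g ∧ (∀ a ∈ s, g a = f a) ∧
      LipschitzWith (1 + ε) g ∧
      (∀ (x : EuclideanSpace ℝ (Fin n)) (i : Fin n),
        |fderiv ℝ g x (EuclideanSpace.single i 1)| ≤ 1 + (ε : ℝ)) ∧
      ∃ C : ℝ, C < max (s.sup' hs fun a => |f a|) 1 + ε ∧
        ∀ x, |g x| ≤ C := by
  set M := s.sup' hs fun a => |f a|
  have hfM : ∀ a ∈ s, |f a| ≤ M := fun a ha => s.le_sup' (fun a => |f a|) ha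
  obtain ⟨F, hF, hfF, hFM⟩ :=
    hf.exists_lipschitzWith_eqOn_abs_le ((abs_nonneg _).trans (hfM _ hs.choose_spec)) hfM
  obtain ⟨φ, hφ⟩ := s.exists_contDiffBump_apply_sub_eq_zero
  obtain ⟨L, hL⟩ := φ.contDiff.lipschitzWith_of_hasCompactSupport φ.hasCompactSupport one_ne_zero
  obtain ⟨δ, hδ, hδε⟩ := exists_pos_mul_lt (NNReal.coe_pos.mpr hε) (s.card * L + s.card + 1 : ℝ)
  have hNδ : 0 ≤ (s.card : ℝ) * δ := by positivity
  have hNδL : 0 ≤ (s.card : ℝ) * δ * L := by positivity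
  lift δ to ℝ≥0 using hδ.le
  obtain ⟨G, hG, hGL, hGF⟩ := hF.exists_contDiff_lipschitzWith_dist_le (NNReal.coe_pos.mpr hδ)
  have hc : ∀ a ∈ s, |(f - G) a| ≤ δ := fun a ha => by
    rw [Pi.sub_apply, hfF ha, abs_sub_comm, ← Real.dist_eq]
    exact hGF a
  have hg : LipschitzWith (1 + ε) (G + φ.interpolant s (f - G)) :=
    (hGL.add (φ.lipschitzWith_interpolant hL hc)).weaken (by gcongr; linarith)
  have hGM : ∀ x, |G x| ≤ M + δ := fun x => by
    have := abs_sub_abs_le_abs_sub (G x) (F x)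
    rw [← Real.dist_eq] at this
    linarith [hFM x, hGF x]
  refine ⟨G + φ.interpolant s (f - G), (hG.of_le (by simp)).add φ.contDiff_interpolant,
    fun a ha => ?_, hg, hg.abs_fderiv_single_le, M + δ + s.card * δ, by linarith [le_max_left M 1],
    fun x => (abs_add_le _ _).trans (add_le_add (hGM x) (φ.abs_interpolant_le hc x))⟩
  simp [φ.interpolant_apply_of_mem hφ ha]
end
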